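/- Let A_1,...,A_K be bounded operators from H1 to H2 with closed range such that R(A_k) ⊆ N(A_{k'}*) and R(A_k*) ⊆ N(A_{k'}) for all k ≠ k'. Then for each k_0, (∑_{k=1}^K A_k* A_k) A_{k_0}† = A_{k_0}* and A_{k_0}† = (∑_{k=1}^K A_k* A_k)† A_{k_0}*. -/

import Mathlib

/-
`A k₀† = A k₀* Y` with `Y = (A k₀†)* A k₀†`, so the orthogonality kills every term of
`S = ∑ A k* A k` except the `k₀`-th one in `S A k₀†`, and `A k₀* A k₀ A k₀† = A k₀*` by the
Penrose equations. For the second identity, the Moore–Penrose inverse `C` of the self-adjoint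
`S` commutes with `S`, so `C S` fixes everything of the form `S U`; in particular
`A k₀† = S (A k₀† Y)` gives `A k₀† = C S A k₀† = C A k₀*`.
-/

noncomputable section
open ContinuousLinearMap
open scoped InnerProductSpace

/-- `X` is the Moore–Penrose inverse of `A`: the four Penrose equations. -/
def IsMPInv {H₁ H₂ : Type*} [NormedAddCommGroup H₁] [InnerProductSpace ℂ H₁] [CompleteSpace H₁]
    [NormedAddCommGroup H₂] [InnerProductSpace ℂ H₂] [CompleteSpace H₂]
    (A : H₁ →L[ℂ] H₂) (X : H₂ →L[ℂ] H₁) : Prop :=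
  A ∘L X ∘L A = A ∧ X ∘L A ∘L X = X ∧
    adjoint (A ∘L X) = A ∘L X ∧ adjoint (X ∘L A) = X ∘L A

variable {H₁ H₂ : Type*} [NormedAddCommGroup H₁] [InnerProductSpace ℂ H₁] [CompleteSpace H₁]
    [NormedAddCommGroup H₂] [InnerProductSpace ℂ H₂] [CompleteSpace H₂]

namespace IsMPInv

variable {A : H₁ →L[ℂ] H₂} {X : H₂ →L[ℂ] H₁}

theorem unique {Y : H₂ →L[ℂ] H₁} (hX : IsMPInv A X) (hY : IsMPInv A Y) : X = Y := by
  obtain ⟨hX1, hX2, hX3, hX4⟩ := hX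
  obtain ⟨hY1, hY2, hY3, hY4⟩ := hY
  have hXAY : X = X ∘L A ∘L Y :=
    calc X = X ∘L adjoint (A ∘L X) := by rw [hX3, hX2]
    _ = X ∘L adjoint ((A ∘L Y) ∘L (A ∘L X)) := by
      conv_lhs => rw [← hY1]
      simp only [comp_assoc]
    _ = X ∘L A ∘L Y := by rw [adjoint_comp, hX3, hY3, ← comp_assoc X (A ∘L X), hX2]
  have hYAY : Y = X ∘L A ∘L Y :=
    calc Y = adjoint (Y ∘L A) ∘L Y := by rw [hY4, comp_assoc, hY2]
    _ = adjoint ((Y ∘L A) ∘L (X ∘L A)) ∘L Y := by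
      conv_lhs => rw [← hX1]
      simp only [comp_assoc]
    _ = X ∘L A ∘L Y := by
      rw [adjoint_comp, hX4, hY4, comp_assoc (X ∘L A), comp_assoc Y, hY2, comp_assoc]
  rw [hXAY, ← hYAY]

protected theorem adjoint (h : IsMPInv A X) :
    IsMPInv (ContinuousLinearMap.adjoint A) (ContinuousLinearMap.adjoint X) := by
  obtain ⟨h1, h2, h3, h4⟩ := h
  refine ⟨?_, ?_, ?_, ?_⟩
  · rw [← adjoint_comp, ← adjoint_comp, comp_assoc, h1]
  · rw [← adjoint_comp, ← adjoint_comp, comp_assoc, h2]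
  · rw [← adjoint_comp, adjoint_adjoint, h4]
  · rw [← adjoint_comp, adjoint_adjoint, h3]

section SelfAdjoint

variable {S C : H₁ →L[ℂ] H₁}

theorem isSelfAdjoint (hC : IsMPInv S C) (hS : IsSelfAdjoint S) : IsSelfAdjoint C := by
  have hC' := hC.adjoint
  rw [isSelfAdjoint_iff'.1 hS] at hC'
  exact isSelfAdjoint_iff'.2 (hC'.unique hC)

theorem comp_comm (hC : IsMPInv S C) (hS : IsSelfAdjoint S) : C ∘L S = S ∘L C := by
  rw [← hC.2.2.2, adjoint_comp, isSelfAdjoint_iff'.1 hS,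
    isSelfAdjoint_iff'.1 (hC.isSelfAdjoint hS)]

theorem comp_self_comp_of_eq_comp {E : Type*} [NormedAddCommGroup E] [NormedSpace ℂ E]
    (hC : IsMPInv S C) (hS : IsSelfAdjoint S) {T U : E →L[ℂ] H₁} (hT : T = S ∘L U) :
    C ∘L S ∘L T = T := by
  have hCSS : C ∘L S ∘L S = S := by rw [← comp_assoc, hC.comp_comm hS, comp_assoc, hC.1]
  rw [hT, ← comp_assoc S S U, ← comp_assoc C, hCSS]

end SelfAdjoint

theorem eq_adjoint_comp (h : IsMPInv A X) :
    X = ContinuousLinearMap.adjoint A ∘L ContinuousLinearMap.adjoint X ∘L X := by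
  rw [← comp_assoc, ← adjoint_comp, h.2.2.2, comp_assoc, h.2.1]

theorem adjoint_comp_self_comp (h : IsMPInv A X) :
    (ContinuousLinearMap.adjoint A ∘L A) ∘L X = ContinuousLinearMap.adjoint A := by
  rw [comp_assoc, ← h.2.2.1, ← adjoint_comp, comp_assoc, h.1]

theorem adjoint_comp_comp_eq_zero {H₃ : Type*} [NormedAddCommGroup H₃] [InnerProductSpace ℂ H₃]
    [CompleteSpace H₃] (h : IsMPInv A X) {A' : H₁ →L[ℂ] H₃}
    (hA' : A' ∘L ContinuousLinearMap.adjoint A = 0) :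
    (ContinuousLinearMap.adjoint A' ∘L A') ∘L X = 0 := by
  rw [h.eq_adjoint_comp]
  calc _ = ContinuousLinearMap.adjoint A' ∘L (A' ∘L ContinuousLinearMap.adjoint A) ∘L
        ContinuousLinearMap.adjoint X ∘L X := rfl
  _ = 0 := by rw [hA', zero_comp, comp_zero]

end IsMPInv

theorem stmt5_general {K : ℕ} (A : Fin K → (H₁ →L[ℂ] H₂)) (B : Fin K → (H₂ →L[ℂ] H₁))
    (C : H₁ →L[ℂ] H₁)
    (horth2 : ∀ k k', k ≠ k' → LinearMap.range (adjoint (A k) : H₂ →ₗ[ℂ] H₁) ≤ LinearMap.ker (A k' : H₁ →ₗ[ℂ] H₂))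
    (hMP : ∀ k, IsMPInv (A k) (B k))
    (hC : IsMPInv (∑ k, adjoint (A k) ∘L A k) C) :
    ∀ k₀, (∑ k, adjoint (A k) ∘L A k) ∘L B k₀ = adjoint (A k₀) ∧
      B k₀ = C ∘L adjoint (A k₀) := by
  intro k₀
  set S : H₁ →L[ℂ] H₁ := ∑ k, adjoint (A k) ∘L A k
  have hS : IsSelfAdjoint S := isSelfAdjoint_sum _ fun k _ =>
    isSelfAdjoint_iff'.2 (by rw [adjoint_comp, adjoint_adjoint])
  have hSB : S ∘L B k₀ = adjoint (A k₀) := by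
    rw [finsetSum_comp, Finset.sum_eq_single k₀ _ (by simp)]
    · exact (hMP k₀).adjoint_comp_self_comp
    · intro k _ hk
      refine (hMP k₀).adjoint_comp_comp_eq_zero ?_
      ext x
      exact horth2 k₀ k (Ne.symm hk) ⟨x, rfl⟩
  refine ⟨hSB, ?_⟩
  have hB : B k₀ = S ∘L B k₀ ∘L adjoint (B k₀) ∘L B k₀ := by
    rw [← comp_assoc, hSB, ← (hMP k₀).eq_adjoint_comp]
  rw [← hSB]
  exact (hC.comp_self_comp_of_eq_comp hS hB).symm

theorem stmt5 {K : ℕ} (A : Fin K → (H₁ →L[ℂ] H₂)) (B : Fin K → (H₂ →L[ℂ] H₁))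
    (C : H₁ →L[ℂ] H₁)
    (hclosed : ∀ k, IsClosed (LinearMap.range (A k : H₁ →ₗ[ℂ] H₂) : Set H₂))
    (horth1 : ∀ k k', k ≠ k' → LinearMap.range (A k : H₁ →ₗ[ℂ] H₂) ≤ LinearMap.ker (adjoint (A k') : H₂ →ₗ[ℂ] H₁))
    (horth2 : ∀ k k', k ≠ k' → LinearMap.range (adjoint (A k) : H₂ →ₗ[ℂ] H₁) ≤ LinearMap.ker (A k' : H₁ →ₗ[ℂ] H₂))
    (hMP : ∀ k, IsMPInv (A k) (B k))
    (hC : IsMPInv (∑ k, adjoint (A k) ∘L A k) C) :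
    ∀ k₀, (∑ k, adjoint (A k) ∘L A k) ∘L B k₀ = adjoint (A k₀) ∧
      B k₀ = C ∘L adjoint (A k₀) :=
  stmt5_general A B C horth2 hMP hC
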